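/- arXiv:1505.01317 — 5 statements merged into one kernel-verified Lean document; each statement's English description precedes it below -/
import Mathlib

section
/- Let λ(x,y;a,b,c) = 2x² + ax − 3y³ − 2cy² − by. Then (x,y) satisfies λ = 0, ∂λ/∂x = 0 and ∂λ/∂y = 0 if and only if a = −4x, b = −y(4c + 9y), and x² = y²(c + 3y). Consequently the beaks/lips locus of the unfolding G(x,y) = (x²+y³+ax+by+cy², xy) is parametrized by (a,b,c) = (∓4y√(c+3y), −y(4c+9y), c) for c + 3y ≥ 0. -/
/-!
The equations `λₓ = 0` and `λ_y = 0` are linear in `a` and `b` and fix them as `a = -4x`,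
`b = -y(4c + 9y)`; on that solution `λ = -2(x² - y²(c + 3y))`. For the parametrization one takes
`x = ∓y√(c + 3y)`.
-/

/-- The Jacobian determinant of the unfolding `G`, as a function of `(x,y)`. -/
noncomputable def lam (a b c : ℝ) (x y : ℝ) : ℝ :=
  2 * x ^ 2 + a * x - 3 * y ^ 3 - 2 * c * y ^ 2 - b * y

theorem hasDerivAt_lam_fst (a b c x y : ℝ) :
    HasDerivAt (fun x' => lam a b c x' y) (4 * x + a) x :=
  ((((((hasDerivAt_pow 2 x).const_mul 2).add ((hasDerivAt_id x).const_mul a)).sub_const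
    (3 * y ^ 3)).sub_const (2 * c * y ^ 2)).sub_const (b * y)).congr_deriv (by norm_num; ring)

theorem hasDerivAt_lam_snd (a b c x y : ℝ) :
    HasDerivAt (fun y' => lam a b c x y') (-9 * y ^ 2 - 4 * c * y - b) y :=
  ((((hasDerivAt_const y (2 * x ^ 2 + a * x)).sub ((hasDerivAt_pow 3 y).const_mul 3)).sub
    ((hasDerivAt_pow 2 y).const_mul (2 * c))).sub ((hasDerivAt_id y).const_mul b)).congr_deriv
    (by norm_num; ring)

theorem lam_neg_four_mul (c x y : ℝ) :
    lam (-4 * x) (-y * (4 * c + 9 * y)) c x y = -2 * (x ^ 2 - y ^ 2 * (c + 3 * y)) := by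
  unfold lam
  ring

theorem lam_critical_zero_iff (a b c x y : ℝ) :
    (lam a b c x y = 0 ∧
      deriv (fun x' => lam a b c x' y) x = 0 ∧
      deriv (fun y' => lam a b c x y') y = 0) ↔
    (a = -4 * x ∧ b = -y * (4 * c + 9 * y) ∧ x ^ 2 = y ^ 2 * (c + 3 * y)) := by
  have ha : 4 * x + a = 0 ↔ a = -4 * x := by constructor <;> intro <;> linarith
  have hb : -9 * y ^ 2 - 4 * c * y - b = 0 ↔ b = -y * (4 * c + 9 * y) := by
    constructor <;> intro <;> linarith
  rw [(hasDerivAt_lam_fst a b c x y).deriv, (hasDerivAt_lam_snd a b c x y).deriv, ha, hb]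
  constructor
  · rintro ⟨hlam, rfl, rfl⟩
    rw [lam_neg_four_mul] at hlam
    exact ⟨rfl, rfl, by linarith⟩
  · rintro ⟨rfl, rfl, hx⟩
    exact ⟨by rw [lam_neg_four_mul, hx]; ring, rfl, rfl⟩

/-- The system `λ = λₓ = λ_y = 0` holds iff `a = −4x`, `b = −y(4c+9y)` and
`x² = y²(c+3y)`; consequently the beaks/lips locus is parametrized by
`(a,b,c) = (∓4y√(c+3y), −y(4c+9y), c)` for `c + 3y ≥ 0`. -/
theorem stmt4 :
    (∀ a b c x y : ℝ,
      (lam a b c x y = 0 ∧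
       deriv (fun x' => lam a b c x' y) x = 0 ∧
       deriv (fun y' => lam a b c x y') y = 0) ↔
      (a = -4 * x ∧ b = -y * (4 * c + 9 * y) ∧ x ^ 2 = y ^ 2 * (c + 3 * y))) ∧
    (∀ y c ε : ℝ, c + 3 * y ≥ 0 → (ε = 1 ∨ ε = -1) →
      ∃ x : ℝ,
        lam (ε * 4 * y * Real.sqrt (c + 3 * y)) (-y * (4 * c + 9 * y)) c x y = 0 ∧
        deriv (fun x' => lam (ε * 4 * y * Real.sqrt (c + 3 * y))
          (-y * (4 * c + 9 * y)) c x' y) x = 0 ∧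
        deriv (fun y' => lam (ε * 4 * y * Real.sqrt (c + 3 * y))
          (-y * (4 * c + 9 * y)) c x y') y = 0) := by
  refine ⟨lam_critical_zero_iff, fun y c ε hc hε => ⟨-ε * y * Real.sqrt (c + 3 * y), ?_⟩⟩
  have hε2 : ε ^ 2 = 1 := by rcases hε with rfl | rfl <;> norm_num
  refine (lam_critical_zero_iff _ _ _ _ _).2 ⟨by ring, rfl, ?_⟩
  linear_combination (y ^ 2 * Real.sqrt (c + 3 * y) ^ 2) * hε2 + y ^ 2 * Real.sq_sqrt hc
end

section
/- For all real y, c with c + 3y ≥ 0, the point (a, b) = (±4y√(c+3y), −y(4c+9y)) satisfies the polynomial equation 243a⁴ + (256c³ − 864bc)a² + 768b³ − 256b²c² = 0 (with either choice of sign). -/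
def beaksLipsPoly {R : Type*} [CommRing R] (a b c : R) : R :=
  243 * a ^ 4 + (256 * c ^ 3 - 864 * b * c) * a ^ 2 + 768 * b ^ 3 - 256 * b ^ 2 * c ^ 2

theorem beaksLipsPoly_eq_zero_of_sq_eq {R : Type*} [CommRing R] (a y c : R)
    (ha : a ^ 2 = 16 * y ^ 2 * (c + 3 * y)) :
    beaksLipsPoly a (-y * (4 * c + 9 * y)) c = 0 := by
  rw [beaksLipsPoly, show a ^ 4 = (a ^ 2) ^ 2 by ring, ha]
  ring

theorem sq_mul_of_sq_eq_one {R : Type*} [CommRing R] {ε : R} (hε : ε ^ 2 = 1) (x : R) :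
    (ε * x) ^ 2 = x ^ 2 := by
  rw [mul_pow, hε, one_mul]

/-- The beaks/lips parametrization satisfies the defining equation
`243a⁴ + (256c³ − 864bc)a² + 768b³ − 256b²c² = 0`. -/
theorem stmt5 (y c ε : ℝ) (hc : c + 3 * y ≥ 0) (hε : ε = 1 ∨ ε = -1) :
    let a := ε * 4 * y * Real.sqrt (c + 3 * y)
    let b := -y * (4 * c + 9 * y)
    243 * a ^ 4 + (256 * c ^ 3 - 864 * b * c) * a ^ 2
      + 768 * b ^ 3 - 256 * b ^ 2 * c ^ 2 = 0 := by
  intro a b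
  have hε2 : ε ^ 2 = 1 := by rcases hε with rfl | rfl <;> norm_num
  have ha : a ^ 2 = 16 * y ^ 2 * (c + 3 * y) := by
    rw [show a = ε * (4 * y * Real.sqrt (c + 3 * y)) by ring, sq_mul_of_sq_eq_one hε2,
      mul_pow, Real.sq_sqrt hc]
    ring
  exact beaksLipsPoly_eq_zero_of_sq_eq a y c ha
end

section
/- For all real y, c with c + 4y > 0, the point (a, b, c) = (± y(4c + 15y)(c + 4y)^{−1/2}, −2y(2c + 5y), c) satisfies the polynomial equation 80a⁴(8b − 3c²) − 8a²(285b²c − 192bc³ + 32c⁵) + b²(45b − 16c²)² = 0 (with either choice of sign). -/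
/-!
Only `a²` enters the equation, and `a² (c + 4y) = y² (4c + 15y)²` for either sign. Multiplied by
`(c + 4y)²`, the equation becomes a polynomial in `a² (c + 4y)`, `y` and `c`, and substituting
`y² (4c + 15y)²` for `a² (c + 4y)` makes it vanish identically.
-/

def swallowtailPoly {R : Type*} [CommRing R] (a b c : R) : R :=
  80 * a ^ 4 * (8 * b - 3 * c ^ 2)
    - 8 * a ^ 2 * (285 * b ^ 2 * c - 192 * b * c ^ 3 + 32 * c ^ 5)
    + b ^ 2 * (45 * b - 16 * c ^ 2) ^ 2

theorem swallowtailPoly_eq_zero {R : Type*} [CommRing R] [NoZeroDivisors R] {a y c : R}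
    (hne : c + 4 * y ≠ 0) (ha : a ^ 2 * (c + 4 * y) = y ^ 2 * (4 * c + 15 * y) ^ 2) :
    swallowtailPoly a (-2 * y * (2 * c + 5 * y)) c = 0 := by
  set b := -2 * y * (2 * c + 5 * y)
  have hmul : (c + 4 * y) ^ 2 * swallowtailPoly a b c = 0 := by
    unfold swallowtailPoly
    linear_combination (80 * (8 * b - 3 * c ^ 2) * (a ^ 2 * (c + 4 * y) + y ^ 2 * (4 * c + 15 * y) ^ 2)
      - 8 * (c + 4 * y) * (285 * b ^ 2 * c - 192 * b * c ^ 3 + 32 * c ^ 5)) * ha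
  exact (mul_eq_zero.mp hmul).resolve_left (pow_ne_zero 2 hne)

/-- The swallowtail parametrization satisfies the defining equation
`80a⁴(8b − 3c²) − 8a²(285b²c − 192bc³ + 32c⁵) + b²(45b − 16c²)² = 0`. -/
theorem stmt7 (y c ε : ℝ) (hc : c + 4 * y > 0) (hε : ε = 1 ∨ ε = -1) :
    let a := ε * y * (4 * c + 15 * y) / Real.sqrt (c + 4 * y)
    let b := -2 * y * (2 * c + 5 * y)
    80 * a ^ 4 * (8 * b - 3 * c ^ 2)
      - 8 * a ^ 2 * (285 * b ^ 2 * c - 192 * b * c ^ 3 + 32 * c ^ 5)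
      + b ^ 2 * (45 * b - 16 * c ^ 2) ^ 2 = 0 := by
  intro a b
  have hε2 : ε ^ 2 = 1 := by rcases hε with rfl | rfl <;> norm_num
  have ha : a ^ 2 * (c + 4 * y) = y ^ 2 * (4 * c + 15 * y) ^ 2 := by
    rw [div_pow, mul_pow, mul_pow, hε2, Real.sq_sqrt hc.le, one_mul]
    exact div_mul_cancel₀ _ hc.ne'
  exact swallowtailPoly_eq_zero hc.ne' ha
end

section
/- Suppose (x, y, a, b, c) with x ≠ 0, y ≠ 0 satisfies x² = y²(c + 4y), ax = −y²(4c + 15y), and by = −2y²(2c + 5y) (i.e. lies over the swallowtail locus). Then η³λ = −x(16x + a) + y(−81y² − 16cy − b) evaluates to −24y²(c + 5y), and η⁴λ = 32x² + ax − 243y³ − 32cy² − by evaluates to −120y³. In particular η³λ = 0 on this locus if and only if y = −c/5, in which case η⁴λ = 24c³/25 ≠ 0 for c > 0. -/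
/-!
The vector field `η = -x ∂/∂x + y ∂/∂y` acts diagonally on monomials, `η (xⁱ yʲ) = (j - i) xⁱ yʲ`,
so `η³λ` and `η⁴λ` are `λ` with its coefficients rescaled by `(j - i)³` and `(j - i)⁴`.
On the swallowtail locus the three defining relations express `x²`, `a x` and `b y` through
`y` and `c`, and substituting them leaves polynomials in `y` and `c` alone.
-/

theorem eta_cube_lambda_eq_of_swallowtail {x y a b c : ℝ}
    (h1 : x ^ 2 = y ^ 2 * (c + 4 * y))
    (h2 : a * x = -y ^ 2 * (4 * c + 15 * y))
    (h3 : b * y = -2 * y ^ 2 * (2 * c + 5 * y)) :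
    -x * (16 * x + a) + y * (-81 * y ^ 2 - 16 * c * y - b) = -24 * y ^ 2 * (c + 5 * y) := by
  linear_combination (-16) * h1 - h2 - h3

theorem eta_four_lambda_eq_of_swallowtail {x y a b c : ℝ}
    (h1 : x ^ 2 = y ^ 2 * (c + 4 * y))
    (h2 : a * x = -y ^ 2 * (4 * c + 15 * y))
    (h3 : b * y = -2 * y ^ 2 * (2 * c + 5 * y)) :
    32 * x ^ 2 + a * x - 243 * y ^ 3 - 32 * c * y ^ 2 - b * y = -120 * y ^ 3 := by
  linear_combination 32 * h1 + h2 - h3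

theorem neg_mul_sq_mul_add_eq_zero_iff {y c : ℝ} (hy : y ≠ 0) :
    -24 * y ^ 2 * (c + 5 * y) = 0 ↔ y = -c / 5 := by
  have hy2 : -24 * y ^ 2 ≠ 0 := mul_ne_zero (by norm_num) (pow_ne_zero 2 hy)
  rw [mul_eq_zero, or_iff_right hy2, eq_div_iff (by norm_num : (5 : ℝ) ≠ 0)]
  constructor <;> intro h <;> linarith

theorem stmt8_general (x y a b c : ℝ) (hy : y ≠ 0)
    (h1 : x ^ 2 = y ^ 2 * (c + 4 * y))
    (h2 : a * x = -y ^ 2 * (4 * c + 15 * y))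
    (h3 : b * y = -2 * y ^ 2 * (2 * c + 5 * y)) :
    (-x * (16 * x + a) + y * (-81 * y ^ 2 - 16 * c * y - b)
        = -24 * y ^ 2 * (c + 5 * y)) ∧
    (32 * x ^ 2 + a * x - 243 * y ^ 3 - 32 * c * y ^ 2 - b * y = -120 * y ^ 3) ∧
    ((-x * (16 * x + a) + y * (-81 * y ^ 2 - 16 * c * y - b) = 0) ↔ y = -c / 5) ∧
    (y = -c / 5 →
      32 * x ^ 2 + a * x - 243 * y ^ 3 - 32 * c * y ^ 2 - b * y = 24 * c ^ 3 / 25 ∧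
      (c > 0 → 32 * x ^ 2 + a * x - 243 * y ^ 3 - 32 * c * y ^ 2 - b * y ≠ 0)) := by
  have eta3 := eta_cube_lambda_eq_of_swallowtail h1 h2 h3
  have eta4 := eta_four_lambda_eq_of_swallowtail h1 h2 h3
  refine ⟨eta3, eta4, eta3 ▸ neg_mul_sq_mul_add_eq_zero_iff hy, fun hyc => ?_⟩
  have butterfly :
      32 * x ^ 2 + a * x - 243 * y ^ 3 - 32 * c * y ^ 2 - b * y = 24 * c ^ 3 / 25 := by
    rw [eta4, hyc]
    ring
  exact ⟨butterfly, fun hc => butterfly ▸ by positivity⟩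

/-- Over the swallowtail locus, `η³λ = −24y²(c+5y)` and `η⁴λ = −120y³`;
hence `η³λ = 0` iff `y = −c/5`, in which case `η⁴λ = 24c³/25 ≠ 0` for `c > 0`. -/
theorem stmt8 (x y a b c : ℝ) (hx : x ≠ 0) (hy : y ≠ 0)
    (h1 : x ^ 2 = y ^ 2 * (c + 4 * y))
    (h2 : a * x = -y ^ 2 * (4 * c + 15 * y))
    (h3 : b * y = -2 * y ^ 2 * (2 * c + 5 * y)) :
    (-x * (16 * x + a) + y * (-81 * y ^ 2 - 16 * c * y - b)
        = -24 * y ^ 2 * (c + 5 * y)) ∧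
    (32 * x ^ 2 + a * x - 243 * y ^ 3 - 32 * c * y ^ 2 - b * y = -120 * y ^ 3) ∧
    ((-x * (16 * x + a) + y * (-81 * y ^ 2 - 16 * c * y - b) = 0) ↔ y = -c / 5) ∧
    (y = -c / 5 →
      32 * x ^ 2 + a * x - 243 * y ^ 3 - 32 * c * y ^ 2 - b * y = 24 * c ^ 3 / 25 ∧
      (c > 0 → 32 * x ^ 2 + a * x - 243 * y ^ 3 - 32 * c * y ^ 2 - b * y ≠ 0)) :=
  stmt8_general x y a b c hy h1 h2 h3
end

section
/- For every c > 0, the butterfly locus of the unfolding G(x,y) = (x² + y³ + ax + by + cy², xy) passes through the parameter points (a,b,c) = (± c^{3/2}/√5, 2c²/5, c); concretely, for c > 0, the point (x,y) = (∓ c^{3/2}/(5√5), −c/5) satisfies the four equations λ = 0, ηλ = 0, η²λ = 0, η³λ = 0 at the parameter (a,b,c) = (± c^{3/2}/√5, 2c²/5, c). -/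
theorem butterfly_equations {a b c x y : ℝ} (hx : x ^ 2 = c ^ 3 / 125) (hax : a * x = -c ^ 3 / 25)
    (hy : y = -c / 5) (hb : b = 2 * c ^ 2 / 5) :
    (2 * x ^ 2 + a * x - 3 * y ^ 3 - 2 * c * y ^ 2 - b * y = 0) ∧
    (-4 * x ^ 2 - a * x - 9 * y ^ 3 - 4 * c * y ^ 2 - b * y = 0) ∧
    (8 * x ^ 2 + a * x - 27 * y ^ 3 - 8 * c * y ^ 2 - b * y = 0) ∧
    (-16 * x ^ 2 - a * x - 81 * y ^ 3 - 16 * c * y ^ 2 - b * y = 0) := by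
  subst hy hb
  exact ⟨by linear_combination 2 * hx + hax, by linear_combination -4 * hx - hax,
    by linear_combination 8 * hx + hax, by linear_combination -16 * hx - hax⟩

theorem butterfly_point_sq {c ε : ℝ} (hc : 0 ≤ c) (hε : ε ^ 2 = 1) :
    (-ε * √(c ^ 3) / (5 * √5)) ^ 2 = c ^ 3 / 125 := by
  rw [div_pow, mul_pow, mul_pow, neg_sq, hε, Real.sq_sqrt (by positivity),
    Real.sq_sqrt (by norm_num)]
  ring

theorem butterfly_param_mul_point {c ε : ℝ} (hc : 0 ≤ c) (hε : ε ^ 2 = 1) :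
    ε * √(c ^ 3) / √5 * (-ε * √(c ^ 3) / (5 * √5)) = -c ^ 3 / 25 := by
  calc ε * √(c ^ 3) / √5 * (-ε * √(c ^ 3) / (5 * √5))
      = -(ε ^ 2 * √(c ^ 3) ^ 2) / (5 * √5 ^ 2) := by ring
    _ = -c ^ 3 / 25 := by
      rw [hε, Real.sq_sqrt (by positivity), Real.sq_sqrt (by norm_num)]
      ring

/-- For `c > 0` the butterfly locus passes through
`(a,b,c) = (± c^{3/2}/√5, 2c²/5, c)`: the point
`(x,y) = (∓ c^{3/2}/(5√5), −c/5)` solves `λ = ηλ = η²λ = η³λ = 0`. -/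
theorem stmt9 (c ε : ℝ) (hc : c > 0) (hε : ε = 1 ∨ ε = -1) :
    let x := -ε * Real.sqrt (c ^ 3) / (5 * Real.sqrt 5)
    let y := -c / 5
    let a := ε * Real.sqrt (c ^ 3) / Real.sqrt 5
    let b := 2 * c ^ 2 / 5
    (2 * x ^ 2 + a * x - 3 * y ^ 3 - 2 * c * y ^ 2 - b * y = 0) ∧
    (-4 * x ^ 2 - a * x - 9 * y ^ 3 - 4 * c * y ^ 2 - b * y = 0) ∧
    (8 * x ^ 2 + a * x - 27 * y ^ 3 - 8 * c * y ^ 2 - b * y = 0) ∧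
    (-16 * x ^ 2 - a * x - 81 * y ^ 3 - 16 * c * y ^ 2 - b * y = 0) := by
  have hε2 : ε ^ 2 = 1 := sq_eq_one_iff.mpr hε
  exact butterfly_equations (butterfly_point_sq hc.le hε2)
    (butterfly_param_mul_point hc.le hε2) rfl rfl
end
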